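/- Let ρ: X×X → [0,∞) be a continuous function and μ, ν Borel probability measures on X. If ρ^W_∞(μ,ν) < ∞, then the infimum defining ρ^W_∞(μ,ν) is attained: there exists a coupling π of μ and ν with ‖ρ‖_{L^∞(π)} = ρ^W_∞(μ,ν). -/

import Mathlib

open MeasureTheory ENNReal NNReal Metric Set Filter

noncomputable section

namespace Kuwada

variable {X : Type*} [MetricSpace X] [MeasurableSpace X] [BorelSpace X]

/-- Every pair of points is joined by a constant-speed minimal geodesic for `dd`. -/
def GeodesicFor (dd : X → X → ℝ) : Prop :=
  ∀ x y : X, ∃ γ : ℝ → X, γ 0 = x ∧ γ 1 = y ∧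
    ∀ s ∈ Icc (0:ℝ) 1, ∀ t ∈ Icc (0:ℝ) 1, dd (γ s) (γ t) = |s - t| * dd x y

/-- `dd` is a continuous distance function on `X`. -/
structure IsContDist (dd : X → X → ℝ) : Prop where
  symm : ∀ x y, dd x y = dd y x
  triangle : ∀ x y z, dd x z ≤ dd x y + dd y z
  eq_zero_iff : ∀ x y, dd x y = 0 ↔ x = y
  cont : Continuous fun z : X × X => dd z.1 z.2

/-- `π` is a coupling of `μ` and `ν`. -/
def IsCoupling (μ ν : Measure X) (π : Measure (X × X)) : Prop :=
  π.map Prod.fst = μ ∧ π.map Prod.snd = ν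

/-- The cost `ρ^W_p (μ, ν)`: infimum of the `L^p (π)`-norm of `ρ` over couplings `π`. -/
def wCost (ρ : X → X → ℝ) (p : ℝ≥0∞) (μ ν : Measure X) : ℝ≥0∞ :=
  ⨅ (π : Measure (X × X)) (_ : IsCoupling μ ν π), eLpNorm (fun z => ρ z.1 z.2) p π

/-- `|∇_dd f| (x) = lim_{r ↓ 0} sup_{0 < dd x y ≤ r} |f x - f y| / dd x y`. -/
def gradNorm (dd : X → X → ℝ) (f : X → ℝ) (x : X) : ℝ≥0∞ :=
  ⨅ (r : ℝ) (_ : 0 < r),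
    ⨆ (y : X) (_ : 0 < dd x y ∧ dd x y ≤ r), ENNReal.ofReal (|f x - f y| / dd x y)

/-- `f ∈ C_{b,L} (X)`: bounded and Lipschitz (w.r.t. the metric `d`). -/
def BddLip (f : X → ℝ) : Prop :=
  (∃ C, ∀ x, |f x| ≤ C) ∧ (∃ K, LipschitzWith K f)

/-- `P f (x) = ∫ f dP_x`. -/
def heatOp (P : X → Measure X) (f : X → ℝ) (x : X) : ℝ := ∫ y, f y ∂ P x

/-- `x ↦ P_x` is continuous w.r.t. the topology of weak convergence. -/
def WeaklyContinuous (P : X → Measure X) : Prop :=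
  ∀ f : BoundedContinuousFunction X ℝ, Continuous fun x => ∫ y, f y ∂ P x

/-- Condition `(C_p)`. -/
def CondC (P : X → Measure X) (dt : X → X → ℝ) (p : ℝ≥0∞) : Prop :=
  ∀ μ ν : Measure X, IsProbabilityMeasure μ → IsProbabilityMeasure ν →
    wCost dist p (μ.bind P) (ν.bind P) ≤ wCost dt p μ ν

/-- Condition `(G_q)` for finite `q`. -/
def CondG (P : X → Measure X) (dt : X → X → ℝ) (q : ℝ) : Prop :=
  ∀ f : X → ℝ, BddLip f → ∀ x : X,
    gradNorm dt (heatOp P f) x ≤ (∫⁻ y, gradNorm dist f y ^ q ∂ P x) ^ (1 / q)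

/-- Condition `(G_∞)`. -/
def CondGInf (P : X → Measure X) (dt : X → X → ℝ) : Prop :=
  ∀ f : X → ℝ, BddLip f →
    (⨆ x, gradNorm dt (heatOp P f) x) ≤ ⨆ x, gradNorm dist f x

/-- `g` is an upper gradient of `f`. -/
def IsUpperGradient (f : X → ℝ) (g : X → ℝ≥0∞) : Prop :=
  ∀ l : ℝ, 0 ≤ l → ∀ γ : ℝ → X, HasUnitSpeedOn γ (Icc 0 l) →
    ENNReal.ofReal |f (γ l) - f (γ 0)| ≤ ∫⁻ s in Icc (0:ℝ) l, g (γ s)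

/-- local volume doubling. -/
def LocDoubling (v : Measure X) : Prop :=
  ∃ D : ℝ≥0, 0 < D ∧ ∃ R₁ : ℝ, 0 < R₁ ∧ ∀ (x : X) (r : ℝ), 0 < r → r < R₁ →
    v (ball x (2 * r)) ≤ (D : ℝ≥0∞) * v (ball x r)

/-- `(X, d, v)` supports a `(1, p₀)`-local Poincaré inequality. -/
def LocPoincare (v : Measure X) (p₀ : ℝ) : Prop :=
  ∀ R : ℝ, 0 < R → ∃ lam C_P : ℝ, 1 ≤ lam ∧ 0 < C_P ∧
    ∀ f : X → ℝ, LocallyIntegrable f v → ∀ g : X → ℝ≥0∞, IsUpperGradient f g →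
      ∀ (x : X) (r : ℝ), 0 < r → r < R →
        (∫⁻ y in ball x r,
          ENNReal.ofReal |f y - (v (ball x r)).toReal⁻¹ * ∫ z in ball x r, f z ∂v| ∂v)
        ≤ ENNReal.ofReal (C_P * r) * (∫⁻ y in ball x (lam * r), g y ^ p₀ ∂v) ^ (1 / p₀)

/-- Each `P_x` is absolutely continuous w.r.t. `v`, with density continuous in `x`. -/
def ContinuousDensity (P : X → Measure X) (v : Measure X) : Prop :=
  ∃ k : X → X → ℝ≥0∞, (∀ x, P x = v.withDensity (k x)) ∧ ∀ y, Continuous fun x => k x y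

/-- Assumption 2.2: existence of a positive Radon measure `v` with the stated properties. -/
def Regularity (P : X → Measure X) (v : Measure X) (p₀ : ℝ) : Prop :=
  IsLocallyFiniteMeasure v ∧ v.Regular ∧ LocDoubling v ∧
    1 ≤ p₀ ∧ LocPoincare v p₀ ∧ ContinuousDensity P v

end Kuwada

/-! The couplings of `μ` and `ν` form a tight, weakly closed, hence (Prokhorov) weakly compact set
of probability measures on `X × X`. The open sets `{‖ρ‖ > c}` make `π ↦ ‖ρ‖_{L^∞(π)}` weakly lower
semicontinuous by the portmanteau theorem, so it attains its infimum on that compact set. -/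

namespace MeasureTheory.ProbabilityMeasure

variable {Ω : Type*} [MeasurableSpace Ω] [TopologicalSpace Ω] [OpensMeasurableSpace Ω]

lemma isClosed_setOf_map_eq {Ω' : Type*} [MeasurableSpace Ω'] [TopologicalSpace Ω']
    [BorelSpace Ω'] [HasOuterApproxClosed Ω'] {f : Ω → Ω'} (hf : Continuous f) (m : Measure Ω') :
    IsClosed {P : ProbabilityMeasure Ω | (P : Measure Ω).map f = m} := by
  have hsub : {Q : ProbabilityMeasure Ω' | (Q : Measure Ω') = m}.Subsingleton :=
    fun Q hQ Q' hQ' => toMeasure_injective (hQ.trans hQ'.symm)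
  convert hsub.isClosed.preimage (continuous_map hf) using 2
  simp

variable [HasOuterApproxClosed Ω]

lemma lowerSemicontinuous_measure_of_isOpen {G : Set Ω} (hG : IsOpen G) :
    LowerSemicontinuous fun P : ProbabilityMeasure Ω => (P : Measure Ω) G :=
  lowerSemicontinuous_iff_le_liminf.2 fun _ => le_liminf_measure_open_of_tendsto tendsto_id hG

lemma lowerSemicontinuous_essSup {f : Ω → ℝ≥0∞} (hf : LowerSemicontinuous f) :
    LowerSemicontinuous fun P : ProbabilityMeasure Ω => essSup f (P : Measure Ω) := by
  intro P c hc
  have hPG : 0 < (P : Measure Ω) {z | c < f z} := by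
    refine pos_iff_ne_zero.2 fun h => hc.not_ge (essSup_le_of_ae_le c (ae_iff.2 ?_))
    simpa only [not_le] using h
  filter_upwards [lowerSemicontinuous_measure_of_isOpen (hf.isOpen_preimage c) P 0 hPG]
    with Q hQ
  by_contra! hle
  refine hQ.ne' (measure_mono_null ?_ (ae_iff.1 (ENNReal.ae_le_essSup f)))
  intro z hz h
  exact (hz : c < f z).not_ge (h.trans hle)

lemma lowerSemicontinuous_eLpNorm_top {E : Type*} [NormedAddCommGroup E] {f : Ω → E}
    (hf : Continuous f) :
    LowerSemicontinuous fun P : ProbabilityMeasure Ω => eLpNorm f ∞ (P : Measure Ω) := by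
  simp only [eLpNorm_exponent_top, eLpNormEssSup]
  exact lowerSemicontinuous_essSup (continuous_enorm.comp hf).lowerSemicontinuous

end MeasureTheory.ProbabilityMeasure

namespace Kuwada

variable {X : Type*} [MeasurableSpace X]

lemma IsCoupling.isProbabilityMeasure {μ ν : Measure X} [IsProbabilityMeasure μ]
    {π : Measure (X × X)} (h : IsCoupling μ ν π) : IsProbabilityMeasure π := by
  constructor
  rw [← Set.preimage_univ (f := Prod.fst), ← Measure.map_apply measurable_fst MeasurableSet.univ,
    h.1, measure_univ]

lemma isCoupling_prod (μ ν : Measure X) [IsProbabilityMeasure μ] [IsProbabilityMeasure ν] :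
    IsCoupling μ ν (μ.prod ν) :=
  ⟨Measure.fst_prod, Measure.snd_prod⟩

variable [TopologicalSpace X] [PolishSpace X] [BorelSpace X]
  (μ ν : Measure X) [IsFiniteMeasure μ] [IsFiniteMeasure ν]

lemma isTightMeasureSet_setOf_isCoupling :
    IsTightMeasureSet {π : Measure (X × X) | IsCoupling μ ν π} := by
  refine .prodMk (isTightMeasureSet_singleton (μ := μ).subset ?_)
    (isTightMeasureSet_singleton (μ := ν).subset ?_)
  · rintro _ ⟨π, hπ, rfl⟩
    exact hπ.1
  · rintro _ ⟨π, hπ, rfl⟩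
    exact hπ.2

lemma isCompact_setOf_isCoupling :
    IsCompact {P : ProbabilityMeasure (X × X) | IsCoupling μ ν P} := by
  have hclosed : IsClosed {P : ProbabilityMeasure (X × X) | IsCoupling μ ν P} :=
    (ProbabilityMeasure.isClosed_setOf_map_eq continuous_fst μ).inter
      (ProbabilityMeasure.isClosed_setOf_map_eq continuous_snd ν)
  refine hclosed.closure_eq ▸ isCompact_closure_of_isTightMeasureSet
    ((isTightMeasureSet_setOf_isCoupling μ ν).subset ?_)
  rintro _ ⟨P, hP, rfl⟩
  exact hP

end Kuwada

open Kuwada in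
theorem wCost_top_attained_general
    {X : Type*} [MetricSpace X]
    [ProperSpace X] [MeasurableSpace X] [BorelSpace X]
    (ρ : X → X → ℝ) (hρcont : Continuous fun z : X × X => ρ z.1 z.2)
    (μ ν : Measure X) (hμ : IsProbabilityMeasure μ) (hν : IsProbabilityMeasure ν) :
    ∃ π : Measure (X × X), IsCoupling μ ν π ∧
      eLpNorm (fun z => ρ z.1 z.2) ∞ π = wCost ρ ∞ μ ν := by
  obtain ⟨P, hP, hmin⟩ := LowerSemicontinuousOn.exists_isMinOn
    ⟨⟨μ.prod ν, inferInstance⟩, isCoupling_prod μ ν⟩ (isCompact_setOf_isCoupling μ ν)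
    ((ProbabilityMeasure.lowerSemicontinuous_eLpNorm_top hρcont).lowerSemicontinuousOn
      {P : ProbabilityMeasure (X × X) | IsCoupling μ ν P})
  refine ⟨P, hP, le_antisymm (le_iInf₂ fun π hπ => ?_) (iInf₂_le (P : Measure (X × X)) hP)⟩
  exact hmin (a := ⟨π, hπ.isProbabilityMeasure⟩) hπ

open Kuwada in
/-- If `ρ^W_∞ (μ, ν) < ∞` then the infimum defining it is attained by some coupling. -/
theorem wCost_top_attained
    {X : Type*} [MetricSpace X] [CompleteSpace X] [TopologicalSpace.SeparableSpace X]
    [ProperSpace X] [MeasurableSpace X] [BorelSpace X]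
    (hgeo : GeodesicFor (dist : X → X → ℝ))
    (ρ : X → X → ℝ) (hρcont : Continuous fun z : X × X => ρ z.1 z.2)
    (hρnonneg : ∀ x y, 0 ≤ ρ x y)
    (μ ν : Measure X) (hμ : IsProbabilityMeasure μ) (hν : IsProbabilityMeasure ν)
    (hfin : wCost ρ ∞ μ ν < ∞) :
    ∃ π : Measure (X × X), IsCoupling μ ν π ∧
      eLpNorm (fun z => ρ z.1 z.2) ∞ π = wCost ρ ∞ μ ν :=
  wCost_top_attained_general ρ hρcont μ ν hμ hν
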